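/- Let M be an L_f-structure all of whose finite substructures lie in 𝒞_f, and define d_M(A) = min{δ(A') : A ⊆ A' ⊆ M, A' finite} for finite A ⊆ M, and cl^{d_M}(A) = {c ∈ M : d_M(A ∪ {c}) = d_M(A)}. Then (M, cl^{d_M}) is a pregeometry (matroid closure: monotone, idempotent, finite character, and satisfying exchange), and the rank function of this pregeometry agrees with d_M on finite sets. -/

import Mathlib

open Classical

/-- A relational structure for a language with relation symbols indexed by `I`,
where `R_i` has arity `ar i`, over a universe `U`.  The carrier may be infinite. -/
structure BigFS (I : Type) (ar : I → ℕ) (U : Type) where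
  carrier : Set U
  rels : Set ((i : I) × (Fin (ar i) → U))
  mem_carrier : ∀ r ∈ rels, ∀ k, r.2 k ∈ carrier

namespace BigFS

variable {I U : Type} {ar : I → ℕ}

/-- The relation instances of `M` all of whose entries lie in `S`
(the relations of the induced substructure on `S`). -/
def relsIn (M : BigFS I ar U) (S : Set U) : Set ((i : I) × (Fin (ar i) → U)) :=
  {r ∈ M.rels | ∀ k, r.2 k ∈ S}

/-- The predimension `δ(S) = |S| - Σ_i α_i |R_i^S|` of the induced substructure of `M`
on the finite set `S` (with weights `α`). -/
noncomputable def bdelta (α : I → ℕ) (M : BigFS I ar U) (S : Finset U) : ℤ :=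
  (S.card : ℤ) - ∑ᶠ r ∈ M.relsIn ↑S, (α r.1 : ℤ)

/-- `M ∈ 𝒞̄_f`: every finite substructure has finitely many relation instances and
nonnegative predimension. -/
def inCbar (α : I → ℕ) (M : BigFS I ar U) : Prop :=
  ∀ S : Finset U, ↑S ⊆ M.carrier → (M.relsIn ↑S).Finite ∧ 0 ≤ bdelta α M S

/-- The dimension `d_M(S) = min { δ(T) : S ⊆ T ⊆ M finite }`. -/
noncomputable def dim (α : I → ℕ) (M : BigFS I ar U) (S : Finset U) : ℤ :=
  sInf {z : ℤ | ∃ T : Finset U, S ⊆ T ∧ ↑T ⊆ M.carrier ∧ bdelta α M T = z}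

/-- A finite subset `S` is self-sufficient in `M`: `δ(S) ≤ δ(T)` for all finite
`S ⊆ T ⊆ M`. -/
def ssIn (α : I → ℕ) (M : BigFS I ar U) (S : Finset U) : Prop :=
  ↑S ⊆ M.carrier ∧ ∀ T : Finset U, S ⊆ T → ↑T ⊆ M.carrier → bdelta α M S ≤ bdelta α M T

/-- A (possibly infinite) subset `Z` is self-sufficient in `M`:
`δ(Z ∩ T) ≤ δ(T)` for every finite substructure `T` of `M`. -/
def ssSet (α : I → ℕ) (M : BigFS I ar U) (Z : Set U) : Prop :=
  Z ⊆ M.carrier ∧ ∀ T : Finset U, ↑T ⊆ M.carrier →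
    bdelta α M (T.filter (fun x => x ∈ Z)) ≤ bdelta α M T

/-- The induced substructure of `M` on the set `Z`. -/
def inducedBig (M : BigFS I ar U) (Z : Set U) : BigFS I ar U :=
  ⟨M.carrier ∩ Z, M.relsIn Z, fun r hr k => ⟨M.mem_carrier r hr.1 k, hr.2 k⟩⟩

/-- An embedding of `B` into `M` (as `L_f`-structures): injective on the carrier,
mapping into the carrier, preserving and reflecting all relations. -/
def IsEmb {V : Type} (B : BigFS I ar U) (M : BigFS I ar V) (g : U → V) : Prop :=
  Set.InjOn g B.carrier ∧ g '' B.carrier ⊆ M.carrier ∧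
  ∀ r : (i : I) × (Fin (ar i) → U), (∀ k, r.2 k ∈ B.carrier) →
    (r ∈ B.rels ↔ (⟨r.1, g ∘ r.2⟩ : (i : I) × (Fin (ar i) → V)) ∈ M.rels)

/-- `M` is a (countable) generic structure for `(𝒞_f, ≤)`: all finite substructures
lie in `𝒞_f` and `M` has the extension property: whenever `Z ≤ M`, `Z ≤ B ∈ 𝒞_f`
(with the same induced structure on `Z`), `B` embeds into `M` over `Z` with
self-sufficient image. -/
def IsGeneric (α : I → ℕ) (M : BigFS I ar U) : Prop :=
  M.carrier.Countable ∧ inCbar α M ∧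
  ∀ B : BigFS I ar U, B.carrier.Finite → inCbar α B →
  ∀ Z : Set U, Z ⊆ B.carrier → ssSet α B Z → ssSet α M Z →
    inducedBig B Z = inducedBig M Z →
    ∃ g : U → U, IsEmb B M g ∧ (∀ a ∈ Z, g a = a) ∧ ssSet α M (g '' B.carrier)

/-- The `d`-closure of a finite set `A` in `M`:
`{c ∈ M : d(A ∪ {c}) = d(A)}`. -/
noncomputable def cld (α : I → ℕ) (M : BigFS I ar U) (A : Finset U) : Set U :=
  {c | c ∈ M.carrier ∧ dim α M (insert c A) = dim α M A}

end BigFS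

open BigFS

section Aux

variable {I U : Type} {ar : I → ℕ}

lemma relsIn_mono (M : BigFS I ar U) {S T : Set U} (h : S ⊆ T) :
    M.relsIn S ⊆ M.relsIn T := fun r hr => ⟨hr.1, fun k => h (hr.2 k)⟩

lemma relsIn_inter (M : BigFS I ar U) (S T : Set U) :
    M.relsIn (S ∩ T) = M.relsIn S ∩ M.relsIn T := by
  ext r
  constructor
  · rintro ⟨h1, h2⟩
    exact ⟨⟨h1, fun k => (h2 k).1⟩, ⟨h1, fun k => (h2 k).2⟩⟩
  · rintro ⟨⟨h1, h2⟩, ⟨_, h3⟩⟩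
    exact ⟨h1, fun k => ⟨h2 k, h3 k⟩⟩

variable (α : I → ℕ) (M : BigFS I ar U)

lemma rsum_eq (S : Finset U) (hfin : (M.relsIn ↑S).Finite) :
    ∑ᶠ r ∈ M.relsIn ↑S, (α r.1 : ℤ) = ∑ r ∈ hfin.toFinset, (α r.1 : ℤ) :=
  finsum_mem_eq_finite_toFinset_sum _ hfin

variable (hM : inCbar α M)
include hM

lemma bdelta_le_card (S : Finset U) (hS : ↑S ⊆ M.carrier) :
    bdelta α M S ≤ (S.card : ℤ) := by
  have h := rsum_eq α M S (hM S hS).1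
  have h2 : (0 : ℤ) ≤ ∑ r ∈ ((hM S hS).1).toFinset, (α r.1 : ℤ) :=
    Finset.sum_nonneg fun r _ => Int.natCast_nonneg _
  unfold bdelta
  rw [h]
  linarith

lemma rsum_mono {S T : Finset U} (h : S ⊆ T) (hT : ↑T ⊆ M.carrier) :
    ∑ᶠ r ∈ M.relsIn ↑S, (α r.1 : ℤ) ≤ ∑ᶠ r ∈ M.relsIn ↑T, (α r.1 : ℤ) := by
  have hS : ↑S ⊆ M.carrier := (Finset.coe_subset.mpr h).trans hT
  rw [rsum_eq α M S (hM S hS).1, rsum_eq α M T (hM T hT).1]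
  apply Finset.sum_le_sum_of_subset_of_nonneg
  · intro r hr
    simp only [Set.Finite.mem_toFinset] at hr ⊢
    exact relsIn_mono M (Finset.coe_subset.mpr h) hr
  · intro r _ _
    exact Int.natCast_nonneg _

lemma bdelta_insert_le (c : U) (hc : c ∈ M.carrier) (T : Finset U)
    (hT : ↑T ⊆ M.carrier) :
    bdelta α M (insert c T) ≤ bdelta α M T + 1 := by
  have hT' : ↑(insert c T) ⊆ M.carrier := by
    rw [Finset.coe_insert]; exact Set.insert_subset hc hT
  have h1 : ((insert c T).card : ℤ) ≤ (T.card : ℤ) + 1 := by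
    exact_mod_cast Finset.card_insert_le c T
  have h2 := rsum_mono α M hM (Finset.subset_insert c T) hT'
  unfold bdelta
  linarith

lemma bdelta_submod (T T' : Finset U) (hT : ↑T ⊆ M.carrier) (hT' : ↑T' ⊆ M.carrier) :
    bdelta α M (T ∪ T') + bdelta α M (T ∩ T') ≤ bdelta α M T + bdelta α M T' := by
  have hU : ↑(T ∪ T') ⊆ M.carrier := by
    rw [Finset.coe_union]; exact Set.union_subset hT hT'
  have hI : ↑(T ∩ T') ⊆ M.carrier := (Finset.coe_subset.mpr Finset.inter_subset_left).trans hT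
  have fa := (hM T hT).1
  have fb := (hM T' hT').1
  have fu := (hM (T ∪ T') hU).1
  have fi := (hM (T ∩ T') hI).1
  have hcard : ((T ∪ T').card : ℤ) + ((T ∩ T').card : ℤ) = (T.card : ℤ) + (T'.card : ℤ) := by
    exact_mod_cast Finset.card_union_add_card_inter T T'
  -- sums
  have hunion_sub : fa.toFinset ∪ fb.toFinset ⊆ fu.toFinset := by
    intro r hr
    simp only [Finset.mem_union, Set.Finite.mem_toFinset] at hr ⊢
    rcases hr with hr | hr
    · exact relsIn_mono M (by rw [Finset.coe_union]; exact Set.subset_union_left) hr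
    · exact relsIn_mono M (by rw [Finset.coe_union]; exact Set.subset_union_right) hr
  have hinter_eq : fa.toFinset ∩ fb.toFinset = fi.toFinset := by
    ext r
    simp only [Finset.mem_inter, Set.Finite.mem_toFinset]
    rw [show ((↑(T ∩ T') : Set U)) = (↑T ∩ ↑T' : Set U) from Finset.coe_inter T T',
      relsIn_inter]
    rfl
  have hsum1 : ∑ r ∈ fa.toFinset ∪ fb.toFinset, (α r.1 : ℤ) ≤ ∑ r ∈ fu.toFinset, (α r.1 : ℤ) :=
    Finset.sum_le_sum_of_subset_of_nonneg hunion_sub (fun r _ _ => Int.natCast_nonneg _)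
  have hsum2 : ∑ r ∈ fa.toFinset ∪ fb.toFinset, (α r.1 : ℤ)
      + ∑ r ∈ fa.toFinset ∩ fb.toFinset, (α r.1 : ℤ)
      = ∑ r ∈ fa.toFinset, (α r.1 : ℤ) + ∑ r ∈ fb.toFinset, (α r.1 : ℤ) :=
    Finset.sum_union_inter
  rw [hinter_eq] at hsum2
  unfold bdelta
  rw [rsum_eq α M _ fa, rsum_eq α M _ fb, rsum_eq α M _ fu, rsum_eq α M _ fi]
  linarith

/-- The defining set of `dim` is nonempty and bounded below, and the infimum is attained. -/
lemma dim_le (A T : Finset U) (h : A ⊆ T) (hT : ↑T ⊆ M.carrier) :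
    dim α M A ≤ bdelta α M T := by
  apply csInf_le
  · exact ⟨0, fun z ⟨T', _, hT', hz⟩ => hz ▸ (hM T' hT').2⟩
  · exact ⟨T, h, hT, rfl⟩

lemma dim_nonneg (A : Finset U) (hA : ↑A ⊆ M.carrier) : 0 ≤ dim α M A := by
  unfold dim
  have hne : (Set.Nonempty {z : ℤ | ∃ T : Finset U, A ⊆ T ∧ ↑T ⊆ M.carrier ∧ bdelta α M T = z}) :=
    ⟨bdelta α M A, ⟨A, subset_rfl, hA, rfl⟩⟩
  apply le_csInf hne
  rintro z ⟨T, _, hT, hz⟩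
  exact hz ▸ (hM T hT).2

lemma dim_exists (A : Finset U) (hA : ↑A ⊆ M.carrier) :
    ∃ T : Finset U, A ⊆ T ∧ ↑T ⊆ M.carrier ∧ bdelta α M T = dim α M A := by
  have h := Int.csInf_mem (s := {z : ℤ | ∃ T : Finset U, A ⊆ T ∧ ↑T ⊆ M.carrier ∧ bdelta α M T = z})
    ⟨bdelta α M A, A, subset_rfl, hA, rfl⟩
    ⟨0, fun z ⟨T', _, hT', hz⟩ => hz ▸ (hM T' hT').2⟩
  exact h

lemma dim_mono {A B : Finset U} (h : A ⊆ B) (hB : ↑B ⊆ M.carrier) :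
    dim α M A ≤ dim α M B := by
  obtain ⟨T, hBT, hT, hval⟩ := dim_exists α M hM B hB
  rw [← hval]
  exact dim_le α M hM A T (h.trans hBT) hT

lemma dim_le_card (A : Finset U) (hA : ↑A ⊆ M.carrier) : dim α M A ≤ (A.card : ℤ) :=
  (dim_le α M hM A A subset_rfl hA).trans (bdelta_le_card α M hM A hA)

lemma dim_insert_le (A : Finset U) (c : U) (hA : ↑A ⊆ M.carrier) (hc : c ∈ M.carrier) :
    dim α M (insert c A) ≤ dim α M A + 1 := by
  obtain ⟨T, hAT, hT, hval⟩ := dim_exists α M hM A hA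
  have h1 : dim α M (insert c A) ≤ bdelta α M (insert c T) := by
    apply dim_le α M hM _ _ (Finset.insert_subset_insert c hAT)
    rw [Finset.coe_insert]; exact Set.insert_subset hc hT
  have h2 := bdelta_insert_le α M hM c hc T hT
  linarith

lemma dim_submod (A B : Finset U) (hA : ↑A ⊆ M.carrier) (hB : ↑B ⊆ M.carrier) :
    dim α M (A ∪ B) + dim α M (A ∩ B) ≤ dim α M A + dim α M B := by
  obtain ⟨T, hAT, hT, hvT⟩ := dim_exists α M hM A hA
  obtain ⟨T', hBT, hT', hvT'⟩ := dim_exists α M hM B hB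
  have h1 : dim α M (A ∪ B) ≤ bdelta α M (T ∪ T') := by
    apply dim_le α M hM _ _ (Finset.union_subset_union hAT hBT)
    rw [Finset.coe_union]; exact Set.union_subset hT hT'
  have h2 : dim α M (A ∩ B) ≤ bdelta α M (T ∩ T') := by
    apply dim_le α M hM _ _ (Finset.inter_subset_inter hAT hBT)
    exact (Finset.coe_subset.mpr Finset.inter_subset_left).trans hT
  have h3 := bdelta_submod α M hM T T' hT hT'
  linarith

-- closure lemmas

lemma cld_subset_carrier (A : Finset U) : cld α M A ⊆ M.carrier := fun _ hc => hc.1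

lemma cld_ext (A : Finset U) (hA : ↑A ⊆ M.carrier) : ↑A ⊆ cld α M A := by
  intro a ha
  exact ⟨hA ha, by rw [Finset.insert_eq_self.mpr (by exact_mod_cast ha)]⟩

lemma carrier_of_mem_cld {A : Finset U} {c : U} (h : c ∈ cld α M A) : c ∈ M.carrier := h.1

lemma cld_mono (A B : Finset U) (hB : ↑B ⊆ M.carrier) (hAB : A ⊆ B) :
    cld α M A ⊆ cld α M B := by
  intro c hc
  obtain ⟨hc1, hc2⟩ := hc
  have hA : ↑A ⊆ M.carrier := (Finset.coe_subset.mpr hAB).trans hB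
  by_cases hcB : c ∈ B
  · exact ⟨hc1, by rw [Finset.insert_eq_self.mpr hcB]⟩
  · have hcA : ↑(insert c A) ⊆ M.carrier := by
      rw [Finset.coe_insert]; exact Set.insert_subset hc1 hA
    have hun : B ∪ insert c A = insert c B := by
      ext x
      simp only [Finset.mem_union, Finset.mem_insert]
      constructor
      · rintro (hx | hx | hx) <;> [exact Or.inr hx; exact Or.inl hx; exact Or.inr (hAB hx)]
      · rintro (hx | hx) <;> [exact Or.inr (Or.inl hx); exact Or.inl hx]
    have hin : B ∩ insert c A = A := by
      ext x
      simp only [Finset.mem_inter, Finset.mem_insert]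
      constructor
      · rintro ⟨hxB, hx | hx⟩
        · exact absurd (hx ▸ hxB) hcB
        · exact hx
      · intro hx
        exact ⟨hAB hx, Or.inr hx⟩
    have hsm := dim_submod α M hM B (insert c A) hB hcA
    rw [hun, hin, hc2] at hsm
    have hle : dim α M B ≤ dim α M (insert c B) := by
      apply dim_mono α M hM (Finset.subset_insert c B)
      rw [Finset.coe_insert]; exact Set.insert_subset hc1 hB
    exact ⟨hc1, by linarith⟩

lemma dim_union_cld (A : Finset U) (hA : ↑A ⊆ M.carrier) :
    ∀ S : Finset U, ↑S ⊆ cld α M A → dim α M (A ∪ S) = dim α M A := by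
  intro S
  induction S using Finset.induction_on with
  | empty => intro _; rw [Finset.union_empty]
  | insert _ _ hs ih =>
    rename_i s S
    intro h
    have hS : ↑S ⊆ cld α M A := by
      intro x hx; exact h (by exact_mod_cast Finset.mem_insert_of_mem (by exact_mod_cast hx))
    have hsA : s ∈ cld α M A := h (by exact_mod_cast Finset.mem_insert_self s S)
    have hIH := ih hS
    have hAS : ↑(A ∪ S) ⊆ M.carrier := by
      rw [Finset.coe_union]
      exact Set.union_subset hA (hS.trans (cld_subset_carrier α M hM A))
    have hs2 : s ∈ cld α M (A ∪ S) :=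
      cld_mono α M hM A (A ∪ S) hAS Finset.subset_union_left hsA
    rw [Finset.union_insert, hs2.2, hIH]

lemma cld_idem (A S : Finset U) (hA : ↑A ⊆ M.carrier) (hS : ↑S ⊆ cld α M A) :
    cld α M S ⊆ cld α M A := by
  intro c hc
  obtain ⟨hc1, hc2⟩ := hc
  have hScar : ↑S ⊆ M.carrier := hS.trans (cld_subset_carrier α M hM A)
  have hAS : ↑(A ∪ S) ⊆ M.carrier := by
    rw [Finset.coe_union]; exact Set.union_subset hA hScar
  have h1 : dim α M (A ∪ S) = dim α M A := dim_union_cld α M hM A hA S hS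
  have hc3 : c ∈ cld α M (A ∪ S) :=
    cld_mono α M hM S (A ∪ S) hAS Finset.subset_union_right ⟨hc1, hc2⟩
  have h2 : dim α M (insert c A) ≤ dim α M (insert c (A ∪ S)) := by
    apply dim_mono α M hM (Finset.insert_subset_insert c Finset.subset_union_left)
    rw [Finset.coe_insert]; exact Set.insert_subset hc1 hAS
  have h3 : dim α M A ≤ dim α M (insert c A) := by
    apply dim_mono α M hM (Finset.subset_insert c A)
    rw [Finset.coe_insert]; exact Set.insert_subset hc1 hA
  have h4 : dim α M (insert c (A ∪ S)) = dim α M A := by rw [hc3.2, h1]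
  exact ⟨hc1, by linarith⟩

lemma cld_exchange (A : Finset U) (a b : U) (hA : ↑A ⊆ M.carrier)
    (ha : a ∈ M.carrier) (hb : b ∈ M.carrier)
    (h1 : a ∈ cld α M (insert b A)) (h2 : a ∉ cld α M A) :
    b ∈ cld α M (insert a A) := by
  have hAa : ↑(insert a A) ⊆ M.carrier := by
    rw [Finset.coe_insert]; exact Set.insert_subset ha hA
  have hAb : ↑(insert b A) ⊆ M.carrier := by
    rw [Finset.coe_insert]; exact Set.insert_subset hb hA
  have hd1 : dim α M A ≤ dim α M (insert a A) := dim_mono α M hM (Finset.subset_insert a A) hAa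
  have hd2 : dim α M (insert a A) ≤ dim α M A + 1 := dim_insert_le α M hM A a hA ha
  have hne : dim α M (insert a A) ≠ dim α M A := fun h => h2 ⟨ha, h⟩
  have hda : dim α M (insert a A) = dim α M A + 1 := by omega
  have hd3 : dim α M (insert b A) ≤ dim α M A + 1 := dim_insert_le α M hM A b hA hb
  have hd4 : dim α M (insert a A) ≤ dim α M (insert a (insert b A)) := by
    apply dim_mono α M hM (Finset.insert_subset_insert a (Finset.subset_insert b A))
    rw [Finset.coe_insert]; exact Set.insert_subset ha hAb
  have hd5 : dim α M (insert a (insert b A)) = dim α M (insert b A) := h1.2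
  have hgoal : dim α M (insert b (insert a A)) = dim α M (insert a A) := by
    rw [Finset.insert_comm, hd5]
    omega
  exact ⟨hb, hgoal⟩

lemma indep_card_le_dim : ∀ (A : Finset U), ↑A ⊆ M.carrier →
    (∀ a ∈ A, a ∉ cld α M (A.erase a)) → (A.card : ℤ) ≤ dim α M A := by
  intro A
  induction A using Finset.strongInduction with
  | _ A IH =>
    intro hA hind
    rcases A.eq_empty_or_nonempty with rfl | ⟨a, ha⟩
    · simpa using dim_nonneg α M hM ∅ (by simp)
    · set A' := A.erase a with hA'def
      have hsub : A' ⊂ A := Finset.erase_ssubset ha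
      have hA'c : ↑A' ⊆ M.carrier := (Finset.coe_subset.mpr hsub.subset).trans hA
      have hind' : ∀ b ∈ A', b ∉ cld α M (A'.erase b) := by
        intro b hb hbc
        apply hind b (Finset.mem_of_mem_erase hb)
        have hsub2 : A'.erase b ⊆ A.erase b :=
          Finset.erase_subset_erase b hsub.subset
        have hAb : ↑(A.erase b) ⊆ M.carrier :=
          (Finset.coe_subset.mpr (Finset.erase_subset b A)).trans hA
        exact cld_mono α M hM (A'.erase b) (A.erase b) hAb hsub2 hbc
      have h1 := IH A' hsub hA'c hind'
      have hins : insert a A' = A := Finset.insert_erase ha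
      have hne : dim α M (insert a A') ≠ dim α M A' := by
        intro h
        exact hind a ha ⟨hA ha, h⟩
      have hd1 : dim α M A' ≤ dim α M (insert a A') := by
        apply dim_mono α M hM (Finset.subset_insert a A')
        rw [hins]; exact hA
      have hd2 : dim α M (insert a A') ≤ dim α M A' + 1 :=
        dim_insert_le α M hM A' a hA'c (hA ha)
      have hcard : A'.card + 1 = A.card := Finset.card_erase_add_one ha
      rw [← hins]
      have hcardi : (insert a A').card = A'.card + 1 := by rw [hins, ← hcard]
      rw [hcardi]
      push_cast
      omega

lemma exists_basis : ∀ (A : Finset U), ↑A ⊆ M.carrier →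
    ∃ B ⊆ A, (B.card : ℤ) = dim α M A ∧
      (∀ b ∈ B, b ∉ cld α M (B.erase b)) ∧ ↑A ⊆ cld α M B := by
  intro A
  induction A using Finset.strongInduction with
  | _ A IH =>
    intro hA
    by_cases hall : ∀ a ∈ A, a ∉ cld α M (A.erase a)
    · refine ⟨A, subset_rfl, ?_, hall, cld_ext α M hM A hA⟩
      exact le_antisymm (indep_card_le_dim α M hM A hA hall) (dim_le_card α M hM A hA)
    · push_neg at hall
      obtain ⟨a, ha, hacl⟩ := hall
      set A' := A.erase a with hA'def
      have hsub : A' ⊂ A := Finset.erase_ssubset ha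
      have hA'c : ↑A' ⊆ M.carrier := (Finset.coe_subset.mpr hsub.subset).trans hA
      obtain ⟨B, hBA', hBcard, hBind, hBcl⟩ := IH A' hsub hA'c
      have hins : insert a A' = A := Finset.insert_erase ha
      have hdim : dim α M A = dim α M A' := by rw [← hins]; exact hacl.2
      have hBc : ↑B ⊆ M.carrier := (Finset.coe_subset.mpr hBA').trans hA'c
      refine ⟨B, hBA'.trans hsub.subset, by rw [hdim]; exact hBcard, hBind, ?_⟩
      intro x hx
      have hclcl : cld α M A' ⊆ cld α M B := cld_idem α M hM B A' hBc hBcl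
      by_cases hxa : x = a
      · exact hclcl (hxa ▸ hacl)
      · have hxA' : x ∈ A' := Finset.mem_erase.mpr ⟨hxa, by exact_mod_cast hx⟩
        exact hBcl (by exact_mod_cast hxA')

end Aux

/-- `(M, cl^{d_M})` is a pregeometry: the `d`-closure is extensive,
monotone, idempotent (on finite sets, which gives finite character), satisfies
exchange, and its rank function agrees with `d_M` on finite sets (every finite
set contains an independent basis of size `d_M`). -/
theorem dclosure_pregeometry {I U : Type} {ar : I → ℕ} (α : I → ℕ)
    (hα : ∀ i, 0 < α i) (M : BigFS I ar U) (hM : inCbar α M) :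
    (∀ A : Finset U, ↑A ⊆ M.carrier → ↑A ⊆ cld α M A) ∧
    (∀ A B : Finset U, ↑B ⊆ M.carrier → A ⊆ B → cld α M A ⊆ cld α M B) ∧
    (∀ A S : Finset U, ↑A ⊆ M.carrier → ↑S ⊆ cld α M A → cld α M S ⊆ cld α M A) ∧
    (∀ (A : Finset U) (a b : U), ↑A ⊆ M.carrier → a ∈ M.carrier → b ∈ M.carrier →
      a ∈ cld α M (insert b A) → a ∉ cld α M A → b ∈ cld α M (insert a A)) ∧
    (∀ A : Finset U, ↑A ⊆ M.carrier → ∃ B ⊆ A, (B.card : ℤ) = dim α M A ∧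
      (∀ b ∈ B, b ∉ cld α M (B.erase b)) ∧ ↑A ⊆ cld α M B) := by
  refine ⟨fun A hA => cld_ext α M hM A hA,
    fun A B hB hAB => cld_mono α M hM A B hB hAB,
    fun A S hA hS => cld_idem α M hM A S hA hS,
    fun A a b hA ha hb h1 h2 => cld_exchange α M hM A a b hA ha hb h1 h2,
    fun A hA => exists_basis α M hM A hA⟩
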